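/- arXiv:2410.20370 — 3 statements merged into one kernel-verified Lean document; each statement's English description precedes it below -/
import Mathlib

section
/- Let Ω ⊂ ℂ be open and let u : Ω → (0,∞) be twice continuously differentiable (as a function of (x,y) with z = x+iy). Then Δ(log u) = (u·Δu − |∇u|²)/u² on Ω, and if for every τ ∈ ℂ the function z ↦ u(z) e^{2 Re(τ z)} has nonnegative Laplacian on Ω, then Δ(log u) ≥ 0 on Ω. -/
open MeasureTheory Filter Topology Set Pointwise
open scoped ENNReal NNReal Classical

noncomputable section

/-- The positive orthant `ℝⁿ₊ = [0,∞)ⁿ`. -/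
def posOrthant (n : ℕ) : Set (Fin n → ℝ) := {x | ∀ i, 0 ≤ x i}

/-- The supporting function `φ_S(ξ) = sup_{x ∈ S} ⟨x, ξ⟩` of a set `S ⊆ ℝⁿ`. -/
def suppFn {n : ℕ} (S : Set (Fin n → ℝ)) (ξ : Fin n → ℝ) : ℝ :=
  sSup ((fun x => ∑ i, x i * ξ i) '' S)

/-- `σ_S = φ_S(1,…,1)`. -/
def sigmaS {n : ℕ} (S : Set (Fin n → ℝ)) : ℝ := suppFn S 1

/-- `ℂ*ⁿ = (ℂ ∖ {0})ⁿ`. -/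
def torusComp (n : ℕ) : Set (Fin n → ℂ) := {z | ∀ i, z i ≠ 0}

/-- The logarithmic supporting function `H_S`:
`H_S(z) = φ_S(log|z₁|,…,log|zₙ|)` on `ℂ*ⁿ`, and the limsup over `ℂ*ⁿ ∋ w → z` elsewhere. -/
def HS {n : ℕ} (S : Set (Fin n → ℝ)) (z : Fin n → ℂ) : ℝ :=
  if z ∈ torusComp n then suppFn S (fun i => Real.log ‖z i‖)
  else Filter.limsup (fun w => suppFn S (fun i => Real.log ‖w i‖)) (𝓝[torusComp n] z)

/-- The positive part of an extended real number, as an element of `ℝ≥0∞`. -/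
def erealPos (x : EReal) : ℝ≥0∞ := if x = ⊤ then ⊤ else ENNReal.ofReal x.toReal

/-- The circle integral `∫₀^{2π} u(a + r e^{iθ} b) dθ` for an `EReal`-valued `u`,
defined as the (upper) integral of the positive part minus that of the negative part. -/
def circInt {n : ℕ} (u : (Fin n → ℂ) → EReal) (a b : Fin n → ℂ) (r : ℝ) : EReal :=
  ((∫⁻ θ in Set.Ioc (0 : ℝ) (2 * Real.pi),
      erealPos (u (a + ((r : ℂ) * Complex.exp ((θ : ℂ) * Complex.I)) • b))) : EReal) -
  ((∫⁻ θ in Set.Ioc (0 : ℝ) (2 * Real.pi),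
      erealPos (-u (a + ((r : ℂ) * Complex.exp ((θ : ℂ) * Complex.I)) • b))) : EReal)

/-- `u : Ω → [−∞,∞)` is plurisubharmonic on an open `Ω ⊆ ℂⁿ`: upper semicontinuous on `Ω`,
`< +∞` on `Ω`, not identically `−∞` on any connected component of `Ω`, and satisfying the
submean inequality `2π · u(a) ≤ ∫₀^{2π} u(a + r e^{iθ} b) dθ` over closed discs
`{a + ζ b : |ζ| ≤ r} ⊆ Ω` in complex lines. -/
def PshOn {n : ℕ} (Ω : Set (Fin n → ℂ)) (u : (Fin n → ℂ) → EReal) : Prop :=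
  UpperSemicontinuousOn u Ω ∧
  (∀ z ∈ Ω, u z ≠ ⊤) ∧
  (∀ z ∈ Ω, ∃ w ∈ connectedComponentIn Ω z, u w ≠ ⊥) ∧
  ∀ a b : Fin n → ℂ, ∀ r : ℝ, 0 < r →
    (∀ ζ : ℂ, ‖ζ‖ ≤ r → a + ζ • b ∈ Ω) →
    ((2 * Real.pi : ℝ) : EReal) * u a ≤ circInt u a b r

/-- The Lelong class `L^S(ℂⁿ)`: plurisubharmonic functions on `ℂⁿ` with `u ≤ H_S + c_u`. -/
def LelongClass {n : ℕ} (S : Set (Fin n → ℝ)) (u : (Fin n → ℂ) → EReal) : Prop :=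
  PshOn Set.univ u ∧ ∃ c : ℝ, ∀ z, u z ≤ ((HS S z + c : ℝ) : EReal)

/-- The Euclidean norm on `ℂⁿ`. -/
def eucNorm {n : ℕ} (z : Fin n → ℂ) : ℝ := Real.sqrt (∑ i, ‖z i‖ ^ 2)

/-- A distance function on `ℂⁿ`: continuous, vanishing exactly at `0`, and absolutely
homogeneous with respect to complex scalars. -/
def IsDistFn {n : ℕ} (μ : (Fin n → ℂ) → ℝ) : Prop :=
  Continuous μ ∧ (∀ z, 0 ≤ μ z) ∧ (∀ z, μ z = 0 ↔ z = 0) ∧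
    ∀ (t : ℂ) (z : Fin n → ℂ), μ (t • z) = ‖t‖ * μ z

/-- `r_μ = inf_{|z| = 1} μ(z)` (Euclidean unit sphere). -/
def rMu {n : ℕ} (μ : (Fin n → ℂ) → ℝ) : ℝ := sInf (μ '' {z | eucNorm z = 1})

/-- `S` is a lower set: `x ∈ S` implies `[0,x₁] × ⋯ × [0,xₙ] ⊆ S`. -/
def IsLowerIn {n : ℕ} (S : Set (Fin n → ℝ)) : Prop :=
  ∀ x ∈ S, ∀ y : Fin n → ℝ, (∀ i, 0 ≤ y i ∧ y i ≤ x i) → y ∈ S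

/-- The standard simplex `Σ = ch{0, e₁, …, eₙ}`. -/
def stdSimpl (n : ℕ) : Set (Fin n → ℝ) :=
  convexHull ℝ (insert 0 (Set.range fun i => Pi.single i 1))


/-- Directional derivative of `f : ℂ → ℝ` in the (real) direction `v`. -/
def pderivC (v : ℂ) (f : ℂ → ℝ) (z : ℂ) : ℝ := fderiv ℝ f z v

/-- The Laplacian `Δf = ∂²f/∂x² + ∂²f/∂y²` of `f : ℂ → ℝ`, `z = x + iy`. -/
def lapC (f : ℂ → ℝ) (z : ℂ) : ℝ :=
  pderivC 1 (pderivC 1 f) z + pderivC Complex.I (pderivC Complex.I f) z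

/-- `|∇f|² = (∂f/∂x)² + (∂f/∂y)²`. -/
def gradSqC (f : ℂ → ℝ) (z : ℂ) : ℝ := (pderivC 1 f z) ^ 2 + (pderivC Complex.I f z) ^ 2

/-! Both parts are second-order chain and product rules. For the second,
`Δ(u e^{2Re(τz)}) = e^{2Re(τz)} (Δu + 4 Re(τ (∂ₓu + i ∂ᵧu)) + 4 |τ|² u)`;
the bracket is a quadratic in `τ` whose minimum, attained at `τ = -(∂ₓu - i ∂ᵧu) / (2u)`, is
`Δu - |∇u|²/u = u Δ(log u)`. -/

lemma ContDiffAt.differentiableAt_pderivC {f : ℂ → ℝ} {z : ℂ} (hf : ContDiffAt ℝ 2 f z)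
    (v : ℂ) : DifferentiableAt ℝ (pderivC v f) z :=
  ((ContinuousLinearMap.apply ℝ ℝ v).differentiableAt).comp z
    ((hf.fderiv_right (m := 1) (by norm_num)).differentiableAt one_ne_zero)

lemma ContDiffAt.eventually_differentiableAt {f : ℂ → ℝ} {z : ℂ}
    (hf : ContDiffAt ℝ 2 f z) : ∀ᶠ w in 𝓝 z, DifferentiableAt ℝ f w :=
  (hf.eventually (by simp)).mono fun _ hw => hw.differentiableAt (by simp)

lemma pderivC_comp {g : ℝ → ℝ} {g' : ℝ} {f : ℂ → ℝ} {z : ℂ}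
    (hf : DifferentiableAt ℝ f z) (hg : HasDerivAt g g' (f z)) (v : ℂ) :
    pderivC v (fun w => g (f w)) z = g' * pderivC v f z := by
  have : HasFDerivAt (fun w => g (f w)) (g' • fderiv ℝ f z) z :=
    hg.comp_hasFDerivAt z hf.hasFDerivAt
  simp [pderivC, this.fderiv]

lemma pderivC_pderivC_comp {g g' : ℝ → ℝ} {g'' : ℝ} {f : ℂ → ℝ} {z : ℂ}
    (hf : ContDiffAt ℝ 2 f z) (hg : ∀ᶠ x in 𝓝 (f z), HasDerivAt g (g' x) x)
    (hg' : HasDerivAt g' g'' (f z)) (v : ℂ) :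
    pderivC v (pderivC v fun w => g (f w)) z =
      g'' * pderivC v f z ^ 2 + g' (f z) * pderivC v (pderivC v f) z := by
  have hfirst : (pderivC v fun w => g (f w)) =ᶠ[𝓝 z] fun w => g' (f w) * pderivC v f w := by
    filter_upwards [hf.eventually_differentiableAt, hf.continuousAt.eventually hg]
      with w hfw hgw
    exact pderivC_comp hfw hgw v
  have hsecond : HasFDerivAt (fun w => g' (f w) * pderivC v f w)
      (g' (f z) • fderiv ℝ (pderivC v f) z + pderivC v f z • g'' • fderiv ℝ f z) z :=
    (hg'.comp_hasFDerivAt z (hf.differentiableAt (by simp)).hasFDerivAt).mul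
      (hf.differentiableAt_pderivC v).hasFDerivAt
  rw [pderivC, hfirst.fderiv_eq, hsecond.fderiv]
  simp only [pderivC, add_apply, smul_apply, smul_eq_mul]
  ring

lemma pderivC_pderivC_mul {f g : ℂ → ℝ} {z : ℂ} (hf : ContDiffAt ℝ 2 f z)
    (hg : ContDiffAt ℝ 2 g z) (v : ℂ) :
    pderivC v (pderivC v fun w => f w * g w) z =
      pderivC v (pderivC v f) z * g z + 2 * (pderivC v f z * pderivC v g z) +
        f z * pderivC v (pderivC v g) z := by
  have hfirst : (pderivC v fun w => f w * g w) =ᶠ[𝓝 z]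
      fun w => pderivC v f w * g w + f w * pderivC v g w := by
    filter_upwards [hf.eventually_differentiableAt, hg.eventually_differentiableAt]
      with w hfw hgw
    have : HasFDerivAt (fun w => f w * g w) (f w • fderiv ℝ g w + g w • fderiv ℝ f w) w :=
      hfw.hasFDerivAt.mul hgw.hasFDerivAt
    simp only [pderivC, this.fderiv, add_apply, smul_apply, smul_eq_mul]
    ring
  have hsecond : HasFDerivAt (fun w => pderivC v f w * g w + f w * pderivC v g w)
      ((pderivC v f z • fderiv ℝ g z + g z • fderiv ℝ (pderivC v f) z) +
        (f z • fderiv ℝ (pderivC v g) z + pderivC v g z • fderiv ℝ f z)) z :=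
    ((hf.differentiableAt_pderivC v).hasFDerivAt.mul
      (hg.differentiableAt (by simp)).hasFDerivAt).add
    ((hf.differentiableAt (by simp)).hasFDerivAt.mul (hg.differentiableAt_pderivC v).hasFDerivAt)
  rw [pderivC, hfirst.fderiv_eq, hsecond.fderiv]
  simp only [pderivC, add_apply, smul_apply, smul_eq_mul]
  ring

lemma pderivC_two_mul_re_mul (τ v w : ℂ) :
    pderivC v (fun w => 2 * (τ * w).re) w = 2 * (τ * v).re := by
  have hre : HasFDerivAt (fun w : ℂ => (τ * w).re)
      (Complex.reCLM.comp ((ContinuousLinearMap.mul ℂ ℂ τ).restrictScalars ℝ)) w :=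
    (Complex.reCLM.comp ((ContinuousLinearMap.mul ℂ ℂ τ).restrictScalars ℝ)).hasFDerivAt
  rw [pderivC, (hre.const_mul 2).fderiv]
  simp

lemma lapC_log {u : ℂ → ℝ} {z : ℂ} (hu : ContDiffAt ℝ 2 u z) (hu0 : u z ≠ 0) :
    lapC (fun w => Real.log (u w)) z = (u z * lapC u z - gradSqC u z) / u z ^ 2 := by
  have hlog : ∀ᶠ x in 𝓝 (u z), HasDerivAt Real.log x⁻¹ x :=
    (eventually_ne_nhds hu0).mono fun _ hx => Real.hasDerivAt_log hx
  simp only [lapC, gradSqC, pderivC_pderivC_comp hu hlog (hasDerivAt_inv hu0)]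
  field_simp
  ring

lemma lapC_mul_exp_two_re {u : ℂ → ℝ} {z : ℂ} (hu : ContDiffAt ℝ 2 u z) (τ : ℂ) :
    lapC (fun w => u w * Real.exp (2 * (τ * w).re)) z =
      Real.exp (2 * (τ * z).re) * (lapC u z + 4 * (τ.re * pderivC 1 u z -
        τ.im * pderivC Complex.I u z) + 4 * Complex.normSq τ * u z) := by
  have hlin : ContDiffAt ℝ 2 (fun w : ℂ => 2 * (τ * w).re) z :=
    (contDiff_const.mul
      (Complex.reCLM.contDiff.comp (contDiff_const.mul contDiff_id))).contDiffAt
  have hexp : ∀ᶠ x in 𝓝 (2 * (τ * z).re), HasDerivAt Real.exp (Real.exp x) x :=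
    .of_forall Real.hasDerivAt_exp
  have hexp_first (v : ℂ) :
      pderivC v (fun w => Real.exp (2 * (τ * w).re)) z =
        Real.exp (2 * (τ * z).re) * (2 * (τ * v).re) := by
    rw [pderivC_comp (hlin.differentiableAt two_ne_zero) (Real.hasDerivAt_exp _),
      pderivC_two_mul_re_mul]
  have hexp_second (v : ℂ) :
      pderivC v (pderivC v fun w => Real.exp (2 * (τ * w).re)) z =
        Real.exp (2 * (τ * z).re) * (2 * (τ * v).re) ^ 2 := by
    rw [pderivC_pderivC_comp hlin hexp (Real.hasDerivAt_exp _), pderivC_two_mul_re_mul,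
      show pderivC v (fun w : ℂ => 2 * (τ * w).re) = fun _ => 2 * (τ * v).re from
        funext (pderivC_two_mul_re_mul τ v)]
    simp [pderivC]
  have hmul := pderivC_pderivC_mul (g := fun w => Real.exp (2 * (τ * w).re)) hu
    (Real.contDiff_exp.contDiffAt.comp z hlin)
  rw [lapC, lapC, hmul, hmul, hexp_first, hexp_first, hexp_second, hexp_second]
  simp only [Complex.mul_re, Complex.I_re, Complex.I_im, Complex.normSq_apply, mul_one,
    mul_zero, zero_sub, mul_neg, neg_sq]
  ring

lemma exists_lapC_mul_exp_two_re_eq_mul_lapC_log {u : ℂ → ℝ} {z : ℂ}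
    (hu : ContDiffAt ℝ 2 u z) (hu0 : u z ≠ 0) :
    ∃ τ : ℂ, lapC (fun w => u w * Real.exp (2 * (τ * w).re)) z =
      Real.exp (2 * (τ * z).re) * (u z * lapC (fun w => Real.log (u w)) z) := by
  refine ⟨⟨-pderivC 1 u z / (2 * u z), pderivC Complex.I u z / (2 * u z)⟩, ?_⟩
  rw [lapC_mul_exp_two_re hu, lapC_log hu hu0]
  simp only [Complex.normSq_mk, gradSqC]
  field_simp
  ring

/-- For `u : Ω → (0,∞)` twice continuously differentiable on open `Ω ⊆ ℂ`:
`Δ(log u) = (uΔu − |∇u|²)/u²` on `Ω`, and if `Δ(u e^{2Re(τz)}) ≥ 0` on `Ω` for every `τ ∈ ℂ`,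
then `Δ(log u) ≥ 0` on `Ω`. -/
theorem statement9 (Ω : Set ℂ) (hΩ : IsOpen Ω) (u : ℂ → ℝ)
    (hu : ContDiffOn ℝ 2 u Ω) (hpos : ∀ z ∈ Ω, 0 < u z) :
    (∀ z ∈ Ω, lapC (fun w => Real.log (u w)) z =
      (u z * lapC u z - gradSqC u z) / (u z) ^ 2) ∧
    ((∀ τ : ℂ, ∀ z ∈ Ω, 0 ≤ lapC (fun w => u w * Real.exp (2 * (τ * w).re)) z) →
      ∀ z ∈ Ω, 0 ≤ lapC (fun w => Real.log (u w)) z) := by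
  have hu_at (z : ℂ) (hz : z ∈ Ω) : ContDiffAt ℝ 2 u z := hu.contDiffAt (hΩ.mem_nhds hz)
  refine ⟨fun z hz => lapC_log (hu_at z hz) (hpos z hz).ne', fun hsub z hz => ?_⟩
  obtain ⟨τ, hτ⟩ := exists_lapC_mul_exp_two_re_eq_mul_lapC_log (hu_at z hz) (hpos z hz).ne'
  have hprod := hτ ▸ hsub τ z hz
  exact (mul_nonneg_iff_of_pos_left (hpos z hz)).1 <|
    (mul_nonneg_iff_of_pos_left (Real.exp_pos _)).1 hprod

end
end

section
/- Let S ⊂ ℝⁿ₊ be compact convex with 0 ∈ S, and suppose S is not a lower set. Then for every δ > 0 there exists w ∈ ℂⁿ with ‖w‖_∞ ≤ δ such that the function z ↦ H_S(z + w) − H_S(z) is not bounded above on ℂⁿ. Consequently H_S is not uniformly continuous on ℂⁿ. -/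
open MeasureTheory Filter Topology Set Pointwise
open scoped ENNReal NNReal Classical

noncomputable section

/-
If `S` is not a lower set, some `y` with `0 ≤ y ≤ x ∈ S` lies outside `S`, and a hyperplane
`⟨·, ξ⟩ = u` separates `y` from `S`. Along the curve `z_T = (e^{T ξ₁}, …, e^{T ξₙ})` one has
`H_S(z_T) = φ_S(T ξ) ≤ T u`. Shifting by `δ` exactly the coordinates with `ξᵢ < 0` keeps those
coordinates of `z_T + w` away from `0`, so testing `φ_S` at `x` gives
`H_S(z_T + w) ≥ T ⟨x, ξ⁺⟩ + const`, and `⟨x, ξ⁺⟩ ≥ ⟨y, ξ⁺⟩ ≥ ⟨y, ξ⟩ > u`.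
The difference thus grows linearly in `T`, and since `δ` is arbitrary this also rules out uniform continuity.
-/

namespace LogSupportingFunction

variable {n : ℕ} {S : Set (Fin n → ℝ)}

lemma le_suppFn (hS : IsCompact S) {x : Fin n → ℝ} (hx : x ∈ S) (ξ : Fin n → ℝ) :
    ∑ i, x i * ξ i ≤ suppFn S ξ :=
  le_csSup (hS.image (by fun_prop)).bddAbove ⟨x, hx, rfl⟩

lemma suppFn_le (hS : S.Nonempty) {ξ : Fin n → ℝ} {c : ℝ}
    (h : ∀ a ∈ S, ∑ i, a i * ξ i ≤ c) : suppFn S ξ ≤ c :=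
  csSup_le (hS.image _) (by rintro _ ⟨a, ha, rfl⟩; exact h a ha)

lemma HS_ofReal {ρ : Fin n → ℝ} (hρ : ∀ i, 0 < ρ i) :
    HS S (fun i => (ρ i : ℂ)) = suppFn S (fun i => Real.log (ρ i)) := by
  have hmem : (fun i => (ρ i : ℂ)) ∈ torusComp n := fun i => Complex.ofReal_ne_zero.2 (hρ i).ne'
  simp only [HS, if_pos hmem, Complex.norm_real, Real.norm_eq_abs, abs_of_pos (hρ _)]

lemma exists_separation_of_not_isLowerIn (hSconv : Convex ℝ S) (hSclosed : IsClosed S)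
    (hSnl : ¬ IsLowerIn S) :
    ∃ (ξ : Fin n → ℝ) (u : ℝ) (x : Fin n → ℝ), x ∈ S ∧ (∀ i, 0 ≤ x i) ∧
      (∀ a ∈ S, ∑ i, a i * ξ i ≤ u) ∧ u < ∑ i, x i * max (ξ i) 0 := by
  simp only [IsLowerIn, not_forall, exists_prop] at hSnl
  obtain ⟨x, hx, y, hyx, hyS⟩ := hSnl
  obtain ⟨f, u, hfS, hfy⟩ := geometric_hahn_banach_closed_point hSconv hSclosed hyS
  set ξ : Fin n → ℝ := fun i => f fun j => if i = j then 1 else 0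
  have hf (a : Fin n → ℝ) : f a = ∑ i, a i * ξ i := by
    simpa [smul_eq_mul] using LinearMap.pi_apply_eq_sum_univ (f : (Fin n → ℝ) →ₗ[ℝ] ℝ) a
  refine ⟨ξ, u, x, hx, fun i => (hyx i).1.trans (hyx i).2,
    fun a ha => (hf a ▸ hfS a ha).le, ?_⟩
  calc u < ∑ i, y i * ξ i := hf y ▸ hfy
    _ ≤ ∑ i, y i * max (ξ i) 0 :=
      Finset.sum_le_sum fun i _ => mul_le_mul_of_nonneg_left (le_max_left _ _) (hyx i).1
    _ ≤ ∑ i, x i * max (ξ i) 0 :=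
      Finset.sum_le_sum fun i _ => mul_le_mul_of_nonneg_right (hyx i).2 (le_max_right _ _)

lemma HS_exp_smul_le (hS : S.Nonempty) {ξ : Fin n → ℝ} {u T : ℝ}
    (hξ : ∀ a ∈ S, ∑ i, a i * ξ i ≤ u) (hT : 0 ≤ T) :
    HS S (fun i => (Real.exp (T * ξ i) : ℂ)) ≤ T * u := by
  rw [HS_ofReal fun i => Real.exp_pos _]
  refine suppFn_le hS fun a ha => ?_
  simp only [Real.log_exp]
  calc ∑ i, a i * (T * ξ i) = T * ∑ i, a i * ξ i := by
        rw [Finset.mul_sum]; exact Finset.sum_congr rfl fun i _ => by ring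
    _ ≤ T * u := mul_le_mul_of_nonneg_left (hξ a ha) hT

lemma le_HS_exp_smul_add (hS : IsCompact S) {x : Fin n → ℝ} (hx : x ∈ S) (hx0 : ∀ i, 0 ≤ x i)
    (ξ : Fin n → ℝ) {δ : ℝ} (hδ : 0 < δ) (T : ℝ) :
    T * ∑ i, x i * max (ξ i) 0 + min (Real.log δ) 0 * ∑ i, x i ≤
      HS S ((fun i => (Real.exp (T * ξ i) : ℂ)) + fun i => if ξ i < 0 then (δ : ℂ) else 0) := by
  set ρ : Fin n → ℝ := fun i => Real.exp (T * ξ i) + if ξ i < 0 then δ else 0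
  have hρ (i : Fin n) : 0 < ρ i := by
    have := Real.exp_pos (T * ξ i); simp only [ρ]; split_ifs <;> linarith
  have hcoord (i : Fin n) : T * max (ξ i) 0 + min (Real.log δ) 0 ≤ Real.log (ρ i) := by
    by_cases hi : ξ i < 0
    · have : δ ≤ ρ i := by simp only [ρ, if_pos hi]; linarith [Real.exp_pos (T * ξ i)]
      rw [max_eq_right hi.le, mul_zero, zero_add]
      exact (min_le_left _ _).trans (Real.log_le_log hδ this)
    · simp only [ρ, if_neg hi, add_zero, Real.log_exp, max_eq_left (not_lt.1 hi)]
      linarith [min_le_right (Real.log δ) 0]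
  have hw : ((fun i => (Real.exp (T * ξ i) : ℂ)) + fun i => if ξ i < 0 then (δ : ℂ) else 0) =
      fun i => (ρ i : ℂ) := by
    funext i; simp only [Pi.add_apply, ρ]; split_ifs <;> push_cast <;> ring
  rw [hw, HS_ofReal hρ]
  refine le_trans ?_ (le_suppFn hS hx _)
  rw [Finset.mul_sum, Finset.mul_sum, ← Finset.sum_add_distrib]
  exact Finset.sum_le_sum fun i _ => by
    nlinarith [mul_le_mul_of_nonneg_left (hcoord i) (hx0 i)]

lemma not_bddAbove_HS_add_sub_HS (hS : IsCompact S) {ξ : Fin n → ℝ} {u : ℝ} {x : Fin n → ℝ}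
    (hx : x ∈ S) (hx0 : ∀ i, 0 ≤ x i) (hξ : ∀ a ∈ S, ∑ i, a i * ξ i ≤ u)
    (hu : u < ∑ i, x i * max (ξ i) 0) {δ : ℝ} (hδ : 0 < δ) :
    ¬ ∃ C : ℝ, ∀ z : Fin n → ℂ,
      HS S (z + fun i => if ξ i < 0 then (δ : ℂ) else 0) - HS S z ≤ C := by
  rintro ⟨C, hC⟩
  set A := ∑ i, x i * max (ξ i) 0
  set B := min (Real.log δ) 0 * ∑ i, x i
  have hgrowth : Tendsto (fun T => T * (A - u) + B) atTop atTop :=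
    tendsto_atTop_add_const_right _ _ (tendsto_id.atTop_mul_const (sub_pos.2 hu))
  obtain ⟨T, hT0, hTC⟩ := ((eventually_ge_atTop 0).and (hgrowth.eventually_gt_atTop C)).exists
  have hlower := le_HS_exp_smul_add hS hx hx0 ξ hδ T
  have hupper := HS_exp_smul_le ⟨x, hx⟩ hξ hT0
  linarith [hC fun i => (Real.exp (T * ξ i) : ℂ)]

lemma eucNorm_le_sqrt_card_mul_norm (z : Fin n → ℂ) : eucNorm z ≤ Real.sqrt n * ‖z‖ := by
  rw [eucNorm, ← Real.sqrt_sq (norm_nonneg z), ← Real.sqrt_mul (Nat.cast_nonneg n)]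
  refine Real.sqrt_le_sqrt ?_
  calc ∑ i, ‖z i‖ ^ 2 ≤ ∑ _i : Fin n, ‖z‖ ^ 2 :=
        Finset.sum_le_sum fun i _ => pow_le_pow_left₀ (norm_nonneg _) (norm_le_pi_norm z i) 2
    _ = n * ‖z‖ ^ 2 := by simp

end LogSupportingFunction

open LogSupportingFunction in
theorem statement11_general {n : ℕ} (S : Set (Fin n → ℝ))
    (hSconv : Convex ℝ S) (hScomp : IsCompact S)
    (hSnl : ¬ IsLowerIn S) :
    (∀ δ : ℝ, 0 < δ → ∃ w : Fin n → ℂ, ‖w‖ ≤ δ ∧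
      ¬ ∃ C : ℝ, ∀ z : Fin n → ℂ, HS S (z + w) - HS S z ≤ C) ∧
    ¬ (∀ ε : ℝ, 0 < ε → ∃ d : ℝ, 0 < d ∧
        ∀ x y : Fin n → ℂ, eucNorm y < d → |HS S (x + y) - HS S x| < ε) := by
  obtain ⟨ξ, u, x, hx, hx0, hξ, hu⟩ :=
    exists_separation_of_not_isLowerIn hSconv hScomp.isClosed hSnl
  have hshift (δ : ℝ) (hδ : 0 < δ) : ∃ w : Fin n → ℂ, ‖w‖ ≤ δ ∧
      ¬ ∃ C : ℝ, ∀ z : Fin n → ℂ, HS S (z + w) - HS S z ≤ C := by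
    refine ⟨fun i => if ξ i < 0 then (δ : ℂ) else 0, ?_,
      not_bddAbove_HS_add_sub_HS hScomp hx hx0 hξ hu hδ⟩
    refine (pi_norm_le_iff_of_nonneg hδ.le).2 fun i => ?_
    split_ifs <;> simp [abs_of_pos hδ, hδ.le]
  refine ⟨hshift, fun hunif => ?_⟩
  obtain ⟨d, hd, hclose⟩ := hunif 1 one_pos
  have hsqrt : 0 < Real.sqrt n + 1 := by positivity
  obtain ⟨w, hw, hunb⟩ := hshift (d / (Real.sqrt n + 1)) (by positivity)
  have hwd : eucNorm w < d :=
    calc eucNorm w ≤ Real.sqrt n * (d / (Real.sqrt n + 1)) :=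
          (eucNorm_le_sqrt_card_mul_norm w).trans (by gcongr)
      _ < d := by rw [mul_div_assoc', div_lt_iff₀ hsqrt]; nlinarith
  exact hunb ⟨1, fun z => (le_abs_self _).trans (hclose z w hwd).le⟩

/-- If the compact convex set `0 ∈ S ⊆ ℝⁿ₊` is not a lower set, then for
every `δ > 0` there is `w ∈ ℂⁿ` with `‖w‖_∞ ≤ δ` such that `z ↦ H_S(z+w) − H_S(z)` is
unbounded above; consequently `H_S` is not uniformly continuous on `ℂⁿ`. -/
theorem statement11 {n : ℕ} (S : Set (Fin n → ℝ))
    (hSsub : S ⊆ posOrthant n) (hSconv : Convex ℝ S) (hScomp : IsCompact S)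
    (hS0 : (0 : Fin n → ℝ) ∈ S) (hSnl : ¬ IsLowerIn S) :
    (∀ δ : ℝ, 0 < δ → ∃ w : Fin n → ℂ, ‖w‖ ≤ δ ∧
      ¬ ∃ C : ℝ, ∀ z : Fin n → ℂ, HS S (z + w) - HS S z ≤ C) ∧
    ¬ (∀ ε : ℝ, 0 < ε → ∃ d : ℝ, 0 < d ∧
        ∀ x y : Fin n → ℂ, eucNorm y < d → |HS S (x + y) - HS S x| < ε) :=
  statement11_general S hSconv hScomp hSnl

end
end

section
/- Let S ⊂ ℝⁿ₊ be a compact convex lower set with 0 ∈ S, let μ be a distance function on ℂⁿ, let u : ℂⁿ → [−∞,∞) satisfy u ≤ H_S + c_u for a constant c_u ∈ ℝ, and let δ ∈ (0, σ_S^{-1} e^{c_u} r_μ), where σ_S = φ_S(1,…,1) and r_μ = inf_{|z|=1} μ(z). Then R^a_{μ,δ}u(z) = −log inf_{w∈ℂⁿ} { e^{−u(w)} + δ^{−1} μ(z−w) } satisfies R^a_{μ,δ}u(z) ≤ H_S(z) + c_u for all z ∈ ℂⁿ. -/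
open MeasureTheory Filter Topology Set Pointwise
open scoped ENNReal NNReal Classical

noncomputable section

/-- The exponential `e^x ∈ [0,∞]` of an extended real number. -/
def expE (x : EReal) : ℝ≥0∞ :=
  if x = ⊥ then 0 else if x = ⊤ then ⊤ else ENNReal.ofReal (Real.exp x.toReal)

/-- The logarithm `log t ∈ [−∞,∞]` of `t ∈ [0,∞]`. -/
def elog (t : ℝ≥0∞) : EReal :=
  if t = 0 then ⊥ else if t = ⊤ then ⊤ else ((Real.log t.toReal : ℝ) : EReal)

/-- Siciak's infimal convolution for a general `u : ℂⁿ → [−∞,∞)`, with the infimum computed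
in `[0,∞]`:
`R^a_{μ,δ} u(z) = −log inf_{w ∈ ℂⁿ} { e^{−u(w)} + δ⁻¹ μ(z − w) }`. -/
def RaGen {n : ℕ} (μ : (Fin n → ℂ) → ℝ) (δ : ℝ) (u : (Fin n → ℂ) → EReal)
    (z : Fin n → ℂ) : EReal :=
  -elog (⨅ w : Fin n → ℂ, expE (-u w) + ENNReal.ofReal (δ⁻¹ * μ (z - w)))

/-! Since `S` is a lower set in `ℝⁿ₊`, `H_S(z) = φ_S(log⁺|z₁|, …, log⁺|zₙ|)` on all of `ℂⁿ`, so `H_S`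
is nonnegative and, as `log⁺` is `1`-Lipschitz, `σ_S`-Lipschitz for the sup norm. Hence for
every `w`, with `a = H_S(z) ≥ 0`, the elementary bound `e^{-a} - e^{-a-s} ≤ s` gives
`e^{-H_S(z)-c} ≤ e^{-H_S(w)-c} + σ_S e^{-c} |z - w| ≤ e^{-u(w)} + δ⁻¹ μ(z - w)`,
the last step because `σ_S e^{-c} δ ≤ r_μ` and `r_μ |z - w| ≤ μ(z - w)`. Taking the infimum
over `w` and then `-log` gives the claim. -/

open Real

section SupportFunction

variable {n : ℕ} {S : Set (Fin n → ℝ)}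

lemma le_suppFn (hS : IsCompact S) {x : Fin n → ℝ} (hx : x ∈ S) (ξ : Fin n → ℝ) :
    ∑ i, x i * ξ i ≤ suppFn S ξ :=
  le_csSup (hS.image (by fun_prop)).bddAbove ⟨x, hx, rfl⟩

lemma suppFn_le (hSne : S.Nonempty) {ξ : Fin n → ℝ} {M : ℝ}
    (h : ∀ x ∈ S, ∑ i, x i * ξ i ≤ M) : suppFn S ξ ≤ M :=
  csSup_le (hSne.image _) (by rintro _ ⟨x, hx, rfl⟩; exact h x hx)

lemma suppFn_nonneg (hS : IsCompact S) (hS0 : (0 : Fin n → ℝ) ∈ S) (ξ : Fin n → ℝ) :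
    0 ≤ suppFn S ξ := by
  simpa using le_suppFn hS hS0 ξ

lemma suppFn_le_add_sigmaS_mul (hSsub : S ⊆ posOrthant n) (hS : IsCompact S)
    (hSne : S.Nonempty) {ξ η : Fin n → ℝ} {d : ℝ} (hd : 0 ≤ d) (h : ∀ i, ξ i ≤ η i + d) :
    suppFn S ξ ≤ suppFn S η + sigmaS S * d := by
  refine suppFn_le hSne fun x hx => ?_
  calc ∑ i, x i * ξ i ≤ ∑ i, x i * (η i + d) :=
        Finset.sum_le_sum fun i _ => mul_le_mul_of_nonneg_left (h i) (hSsub hx i)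
    _ = ∑ i, x i * η i + (∑ i, x i * 1) * d := by
        simp only [mul_add, mul_one, Finset.sum_add_distrib, Finset.sum_mul]
    _ ≤ suppFn S η + sigmaS S * d := by
        gcongr
        · exact le_suppFn hS hx η
        · exact le_suppFn hS hx 1

lemma suppFn_max_zero (hSsub : S ⊆ posOrthant n) (hS : IsCompact S) (hSne : S.Nonempty)
    (hSlow : IsLowerIn S) (ξ : Fin n → ℝ) : suppFn S (fun i => max 0 (ξ i)) = suppFn S ξ := by
  apply le_antisymm
  · refine suppFn_le hSne fun x hx => ?_
    set y : Fin n → ℝ := fun i => if 0 ≤ ξ i then x i else 0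
    have hy : y ∈ S := hSlow x hx y fun i => by
      by_cases h : 0 ≤ ξ i <;> simp [y, h, hSsub hx i]
    have hxy : ∑ i, x i * max 0 (ξ i) = ∑ i, y i * ξ i := by
      refine Finset.sum_congr rfl fun i _ => ?_
      by_cases h : 0 ≤ ξ i
      · simp [y, h]
      · simp [y, h, max_eq_left (le_of_not_ge h)]
    exact hxy ▸ le_suppFn hS hy ξ
  · refine suppFn_le hSne fun x hx => (Finset.sum_le_sum fun i _ => ?_).trans
      (le_suppFn hS hx _)
    exact mul_le_mul_of_nonneg_left (le_max_right _ _) (hSsub hx i)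

end SupportFunction

lemma posLog_norm_le_add_norm_sub {E : Type*} [SeminormedAddCommGroup E] (x y : E) :
    log⁺ ‖x‖ ≤ log⁺ ‖y‖ + ‖x - y‖ := by
  rw [posLog_eq_log_max_one (norm_nonneg x), posLog_eq_log_max_one (norm_nonneg y)]
  set A := max 1 ‖x‖
  set B := max 1 ‖y‖
  have hA : 0 < A := one_pos.trans_le (le_max_left _ _)
  have hB : 1 ≤ B := le_max_left _ _
  calc log A = log B + log (A / B) := by
        rw [log_div hA.ne' (by positivity)]; ring
    _ ≤ log B + (A - B) / B := by
        gcongr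
        rw [sub_div, div_self (by positivity)]
        exact log_le_sub_one_of_pos (by positivity)
    _ ≤ log B + |A - B| := by
        gcongr
        exact (div_le_div_of_nonneg_right (le_abs_self _) (by positivity)).trans
          (div_le_self (abs_nonneg _) hB)
    _ ≤ log B + ‖x - y‖ := by
        gcongr
        have := (abs_max_sub_max_le_abs ‖x‖ ‖y‖ 1).trans (abs_norm_sub_norm_le x y)
        rwa [max_comm ‖x‖, max_comm ‖y‖] at this
def suppFnPosLog {n : ℕ} (S : Set (Fin n → ℝ)) (z : Fin n → ℂ) : ℝ :=
  suppFn S (fun i => log⁺ ‖z i‖)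

section SuppFnPosLog

variable {n : ℕ} {S : Set (Fin n → ℝ)}

lemma suppFnPosLog_le_add (hSsub : S ⊆ posOrthant n) (hS : IsCompact S) (hSne : S.Nonempty)
    (z w : Fin n → ℂ) : suppFnPosLog S z ≤ suppFnPosLog S w + sigmaS S * ‖z - w‖ :=
  suppFn_le_add_sigmaS_mul hSsub hS hSne (norm_nonneg _) fun i =>
    (posLog_norm_le_add_norm_sub (z i) (w i)).trans (by gcongr; exact norm_le_pi_norm (z - w) i)

lemma lipschitzWith_suppFnPosLog (hSsub : S ⊆ posOrthant n) (hS : IsCompact S)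
    (hSne : S.Nonempty) : LipschitzWith (Real.toNNReal (sigmaS S)) (suppFnPosLog S) :=
  .of_le_add_mul' _ fun z w => by
    simpa only [dist_eq_norm] using suppFnPosLog_le_add hSsub hS hSne z w

lemma dense_torusComp (n : ℕ) : Dense (torusComp n) := by
  have : torusComp n = Set.pi univ fun _ => ({0}ᶜ : Set ℂ) := by ext; simp [torusComp]
  rw [this]
  exact dense_pi _ fun _ _ => dense_compl_singleton 0

lemma HS_eq_suppFnPosLog (hSsub : S ⊆ posOrthant n) (hS : IsCompact S) (hSne : S.Nonempty)
    (hSlow : IsLowerIn S) (z : Fin n → ℂ) : HS S z = suppFnPosLog S z := by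
  have hlog : (fun w : Fin n → ℂ => suppFn S fun i => log ‖w i‖) = suppFnPosLog S := by
    ext w
    exact (suppFn_max_zero hSsub hS hSne hSlow _).symm
  unfold HS
  split_ifs
  · exact congrFun hlog z
  · have := mem_closure_iff_nhdsWithin_neBot.mp (dense_torusComp n z)
    rw [hlog]
    exact ((lipschitzWith_suppFnPosLog hSsub hS hSne).continuous.tendsto z).mono_left
      nhdsWithin_le_nhds |>.limsup_eq

end SuppFnPosLog

section DistanceFunction

variable {n : ℕ}

lemma eucNorm_eq_norm_toLp (v : Fin n → ℂ) : eucNorm v = ‖WithLp.toLp 2 v‖ :=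
  (EuclideanSpace.norm_eq _).symm

lemma norm_le_eucNorm (v : Fin n → ℂ) : ‖v‖ ≤ eucNorm v := by
  rw [eucNorm_eq_norm_toLp]
  exact pi_norm_le_iff_of_nonneg (norm_nonneg _) |>.mpr fun i => PiLp.norm_apply_le (WithLp.toLp 2 v) i

lemma rMu_nonneg {μ : (Fin n → ℂ) → ℝ} (hμ : ∀ z, 0 ≤ μ z) : 0 ≤ rMu μ :=
  Real.sInf_nonneg (by rintro _ ⟨z, -, rfl⟩; exact hμ z)

lemma rMu_mul_eucNorm_le {μ : (Fin n → ℂ) → ℝ} (hμ : ∀ z, 0 ≤ μ z)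
    (hsmul : ∀ (t : ℂ) z, μ (t • z) = ‖t‖ * μ z) (v : Fin n → ℂ) :
    rMu μ * eucNorm v ≤ μ v := by
  rcases eq_or_ne v 0 with rfl | hv
  · simpa [eucNorm] using hμ 0
  have ht : 0 < eucNorm v := by
    rw [eucNorm_eq_norm_toLp]
    exact norm_pos_iff.mpr (by simpa using hv)
  set t := eucNorm v
  have hunit : eucNorm ((t : ℂ)⁻¹ • v) = 1 := by
    rw [eucNorm_eq_norm_toLp, WithLp.toLp_smul, norm_smul, ← eucNorm_eq_norm_toLp, norm_inv,
      Complex.norm_real, Real.norm_of_nonneg ht.le, inv_mul_cancel₀ ht.ne']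
  have hle : rMu μ ≤ μ ((t : ℂ)⁻¹ • v) :=
    csInf_le ⟨0, by rintro _ ⟨z, -, rfl⟩; exact hμ z⟩ ⟨_, hunit, rfl⟩
  rw [hsmul, norm_inv, Complex.norm_real, Real.norm_of_nonneg ht.le] at hle
  rwa [le_inv_mul_iff₀ ht, mul_comm] at hle

lemma rMu_mul_norm_le {μ : (Fin n → ℂ) → ℝ} (hμ : IsDistFn μ) (v : Fin n → ℂ) :
    rMu μ * ‖v‖ ≤ μ v :=
  (mul_le_mul_of_nonneg_left (norm_le_eucNorm v) (rMu_nonneg hμ.2.1)).trans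
    (rMu_mul_eucNorm_le hμ.2.1 hμ.2.2.2 v)

end DistanceFunction

lemma ofReal_exp_neg_le_expE_neg {x : EReal} {r : ℝ} (h : x ≤ r) :
    ENNReal.ofReal (exp (-r)) ≤ expE (-x) := by
  induction x using EReal.rec with
  | bot => simp [expE]
  | top => simp at h
  | coe x =>
    rw [← EReal.coe_neg, expE, if_neg (EReal.coe_ne_bot _), if_neg (EReal.coe_ne_top _),
      EReal.toReal_coe]
    gcongr
    exact_mod_cast h

lemma neg_elog_le_of_ofReal_exp_neg_le {r : ℝ} {I : ℝ≥0∞} (h : ENNReal.ofReal (exp (-r)) ≤ I) :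
    -elog I ≤ r := by
  rcases eq_or_ne I ⊤ with rfl | hI
  · simp [elog]
  have hI0 : I ≠ 0 := (ENNReal.ofReal_pos.mpr (exp_pos _)).trans_le h |>.ne'
  rw [elog, if_neg hI0, if_neg hI, ← EReal.coe_neg, EReal.coe_le_coe_iff, neg_le,
    ← log_exp (-r)]
  exact log_le_log (exp_pos _) ((ENNReal.ofReal_le_iff_le_toReal hI).mp h)

/-- `e^{-a} - e^{-a-s} = e^{-a}(1 - e^{-s}) ≤ s` for `a, s ≥ 0`. -/
lemma exp_neg_le_exp_neg_add {a b s : ℝ} (ha : 0 ≤ a) (hs : 0 ≤ s) (hb : b ≤ a + s) :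
    exp (-a) ≤ exp (-b) + s := by
  have h1 : 1 - s ≤ exp (-s) := by linarith [add_one_le_exp (-s)]
  have h2 : exp (-(a + s)) ≤ exp (-b) := exp_le_exp.mpr (by linarith)
  have h3 : exp (-a) ≤ 1 := exp_le_one_iff.mpr (by linarith)
  rw [neg_add, exp_add] at h2
  nlinarith [exp_pos (-a), exp_pos (-s)]

lemma exp_neg_suppFnPosLog_le {n : ℕ} {S : Set (Fin n → ℝ)} (hSsub : S ⊆ posOrthant n)
    (hS : IsCompact S) (hS0 : (0 : Fin n → ℝ) ∈ S) {μ : (Fin n → ℂ) → ℝ} (hμ : IsDistFn μ)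
    {c δ : ℝ} (hδ : 0 < δ) (hδσ : sigmaS S * exp (-c) * δ ≤ rMu μ) (z w : Fin n → ℂ) :
    exp (-(suppFnPosLog S z + c)) ≤ exp (-(suppFnPosLog S w + c)) + δ⁻¹ * μ (z - w) := by
  have hσ : 0 ≤ sigmaS S := suppFn_nonneg hS hS0 1
  have hlip : exp (-suppFnPosLog S z) ≤ exp (-suppFnPosLog S w) + sigmaS S * ‖z - w‖ :=
    exp_neg_le_exp_neg_add (suppFn_nonneg hS hS0 _) (by positivity) <| by
      simpa only [norm_sub_rev] using suppFnPosLog_le_add hSsub hS ⟨0, hS0⟩ w z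
  have hμ' : sigmaS S * exp (-c) * ‖z - w‖ ≤ δ⁻¹ * μ (z - w) := by
    rw [le_inv_mul_iff₀ hδ]
    calc δ * (sigmaS S * exp (-c) * ‖z - w‖) = sigmaS S * exp (-c) * δ * ‖z - w‖ := by ring
      _ ≤ rMu μ * ‖z - w‖ := by gcongr
      _ ≤ μ (z - w) := rMu_mul_norm_le hμ _
  calc exp (-(suppFnPosLog S z + c)) = exp (-suppFnPosLog S z) * exp (-c) := by
        rw [neg_add, exp_add]
    _ ≤ (exp (-suppFnPosLog S w) + sigmaS S * ‖z - w‖) * exp (-c) := by gcongr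
    _ = exp (-(suppFnPosLog S w + c)) + sigmaS S * exp (-c) * ‖z - w‖ := by
        rw [neg_add, exp_add]; ring
    _ ≤ exp (-(suppFnPosLog S w + c)) + δ⁻¹ * μ (z - w) := by gcongr

theorem statement14_general {n : ℕ} (S : Set (Fin n → ℝ))
    (hSsub : S ⊆ posOrthant n) (hScomp : IsCompact S)
    (hS0 : (0 : Fin n → ℝ) ∈ S) (hSlow : IsLowerIn S)
    (μ : (Fin n → ℂ) → ℝ) (hμ : IsDistFn μ)
    (u : (Fin n → ℂ) → EReal) (c : ℝ) (hc : ∀ z, u z ≤ ((HS S z + c : ℝ) : EReal))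
    (δ : ℝ) (hδ0 : 0 < δ) (hδ1 : δ < (sigmaS S)⁻¹ * Real.exp c * rMu μ) :
    ∀ z : Fin n → ℂ, RaGen μ δ u z ≤ ((HS S z + c : ℝ) : EReal) := by
  intro z
  have hHS := HS_eq_suppFnPosLog hSsub hScomp ⟨0, hS0⟩ hSlow
  have hδσ : sigmaS S * exp (-c) * δ ≤ rMu μ := by
    rcases (show 0 ≤ sigmaS S from suppFn_nonneg hScomp hS0 1).eq_or_lt with hσ | hσ
    · rw [← hσ, zero_mul, zero_mul]
      exact rMu_nonneg hμ.2.1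
    · calc sigmaS S * exp (-c) * δ ≤ sigmaS S * exp (-c) * ((sigmaS S)⁻¹ * exp c * rMu μ) := by
            gcongr
      _ = rMu μ := by
            rw [exp_neg]
            field_simp
  rw [hHS]
  refine neg_elog_le_of_ofReal_exp_neg_le (le_iInf fun w => ?_)
  calc ENNReal.ofReal (exp (-(suppFnPosLog S z + c)))
      ≤ ENNReal.ofReal (exp (-(suppFnPosLog S w + c)) + δ⁻¹ * μ (z - w)) :=
        ENNReal.ofReal_le_ofReal (exp_neg_suppFnPosLog_le hSsub hScomp hS0 hμ hδ0 hδσ z w)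
    _ = ENNReal.ofReal (exp (-(suppFnPosLog S w + c))) + ENNReal.ofReal (δ⁻¹ * μ (z - w)) :=
        ENNReal.ofReal_add (exp_nonneg _) (mul_nonneg (inv_nonneg.mpr hδ0.le) (hμ.2.1 _))
    _ ≤ expE (-u w) + ENNReal.ofReal (δ⁻¹ * μ (z - w)) := by
        gcongr
        exact ofReal_exp_neg_le_expE_neg (hHS w ▸ hc w)

/-- For a compact convex lower set `0 ∈ S ⊆ ℝⁿ₊`, a distance function `μ`,
`u ≤ H_S + c_u` and `δ ∈ (0, σ_S⁻¹ e^{c_u} r_μ)`, one has `R^a_{μ,δ} u ≤ H_S + c_u` on `ℂⁿ`. -/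
theorem statement14 {n : ℕ} (S : Set (Fin n → ℝ))
    (hSsub : S ⊆ posOrthant n) (hSconv : Convex ℝ S) (hScomp : IsCompact S)
    (hS0 : (0 : Fin n → ℝ) ∈ S) (hSlow : IsLowerIn S)
    (μ : (Fin n → ℂ) → ℝ) (hμ : IsDistFn μ)
    (u : (Fin n → ℂ) → EReal) (c : ℝ) (hc : ∀ z, u z ≤ ((HS S z + c : ℝ) : EReal))
    (δ : ℝ) (hδ0 : 0 < δ) (hδ1 : δ < (sigmaS S)⁻¹ * Real.exp c * rMu μ) :
    ∀ z : Fin n → ℂ, RaGen μ δ u z ≤ ((HS S z + c : ℝ) : EReal) :=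
  statement14_general S hSsub hScomp hS0 hSlow μ hμ u c hc δ hδ0 hδ1

end
end
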